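/- arXiv:1906.10991 — 2 statements merged into one kernel-verified Lean document; each statement's English description precedes it below -/
import Mathlib

section
/- Regressor encoding theorem. Let R = ⟨D_1, …, D_r⟩ be a gradient boosted regressor over ℝ^m, and let x ∈ ℝ^m, wl_1, …, wl_r ∈ ℝ and out ∈ ℝ. If the regressor encoding Υ(R) holds at (x, wl_1, …, wl_r, out), then R̂(x) = out. -/
/-- A decision tree over `ℝ^m`: every internal node carries a Boolean condition on
inputs, every leaf carries a real weight. -/
inductive DTree (m : ℕ) : Type where
  | leaf (w : ℝ) : DTree m
  | node (cond : (Fin m → ℝ) → Bool) (pos neg : DTree m) : DTree m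

namespace DTree

variable {m : ℕ}

/-- Valuation `D̂(x)`: traverse from the root, going to the positive child when the
condition holds and to the negative child otherwise; return the weight of the leaf reached. -/
def eval : DTree m → (Fin m → ℝ) → ℝ
  | leaf w, _ => w
  | node c p n, x => if c x then p.eval x else n.eval x

/-- The root-to-leaf path (as a list of branch choices, `true` = positive child)
followed by the valuation traversal of `D` on input `x`. -/
def traverse : DTree m → (Fin m → ℝ) → List Bool
  | leaf _, _ => []
  | node c p n, x => if c x then true :: p.traverse x else false :: n.traverse x

/-- `leafWeight D l = some w` iff `l` is a root-to-leaf path of `D` whose leaf has weight `w`. -/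
def leafWeight : DTree m → List Bool → Option ℝ
  | leaf w, [] => some w
  | node _ p _, true :: l => p.leafWeight l
  | node _ _ n, false :: l => n.leafWeight l
  | _, _ => none

/-- `l` identifies a leaf of `D`. -/
def IsLeaf (D : DTree m) (l : List Bool) : Prop := (D.leafWeight l).isSome

/-- All conditions along the root-to-leaf path `l` hold at `x` in the polarity of the
branch taken (true for positive branches, false for negative ones). -/
def pathHolds : DTree m → List Bool → (Fin m → ℝ) → Prop
  | leaf _, [], _ => True
  | node c p _, true :: l, x => c x = true ∧ p.pathHolds l x
  | node c _ n, false :: l, x => c x = false ∧ n.pathHolds l x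
  | _, _, _ => False

/-- Leaf encoding `π(l)` at `(x, wl)`: `wl` is the weight of the leaf `l` and every
condition on the path from the root to `l` holds at `x` in the polarity of the branch taken. -/
def leafEnc (D : DTree m) (l : List Bool) (x : Fin m → ℝ) (wl : ℝ) : Prop :=
  D.leafWeight l = some wl ∧ D.pathHolds l x

/-- Tree encoding `Π(D)` at `(x, wl)`: the disjunction of `π(l)` over all leaves `l` of `D`. -/
def treeEnc (D : DTree m) (x : Fin m → ℝ) (wl : ℝ) : Prop :=
  ∃ l : List Bool, D.leafEnc l x wl

end DTree

/-- Regressor encoding `Υ(R)` at `(x, wl_1, …, wl_r, out)`: every tree encoding `Π(D_i)`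
holds at `(x, wl_i)`, and `out` is the sum of the `wl_i`. -/
def regEnc {m r : ℕ} (R : Fin r → DTree m) (x : Fin m → ℝ) (wl : Fin r → ℝ)
    (out : ℝ) : Prop :=
  (∀ i : Fin r, (R i).treeEnc x (wl i)) ∧ out = ∑ i : Fin r, wl i

namespace DTree

variable {m : ℕ} {x : Fin m → ℝ} {wl : ℝ}

theorem eval_eq_of_leafEnc : ∀ {D : DTree m} {l : List Bool}, D.leafEnc l x wl → D.eval x = wl
  | leaf _, [], ⟨hw, _⟩ => Option.some_injective _ hw
  | leaf _, _ :: _, ⟨_, hp⟩ => hp.elim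
  | node _ _ _, [], ⟨_, hp⟩ => hp.elim
  | node _ _ _, true :: _, ⟨hw, hc, hp⟩ => by
    rw [eval, hc, if_pos rfl]
    exact eval_eq_of_leafEnc ⟨hw, hp⟩
  | node _ _ _, false :: _, ⟨hw, hc, hn⟩ => by
    rw [eval, hc, if_neg Bool.false_ne_true]
    exact eval_eq_of_leafEnc ⟨hw, hn⟩

theorem eval_eq_of_treeEnc {D : DTree m} (h : D.treeEnc x wl) : D.eval x = wl :=
  let ⟨_, hl⟩ := h
  eval_eq_of_leafEnc hl

end DTree

/-- **Regressor encoding theorem.** If `Υ(R)` holds at `(x, wl_1, …, wl_r, out)`, then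
`R̂(x) = Σᵢ D̂ᵢ(x) = out`. -/
theorem regressor_encoding {m r : ℕ} (R : Fin r → DTree m) (x : Fin m → ℝ)
    (wl : Fin r → ℝ) (out : ℝ) (h : regEnc R x wl out) :
    (∑ i : Fin r, (R i).eval x) = out := by
  obtain ⟨htrees, rfl⟩ := h
  exact Finset.sum_congr rfl fun i _ => DTree.eval_eq_of_treeEnc (htrees i)
end

section
/- Safe pruning for classifiers. Let C = ⟨R_1, …, R_c⟩ be a gradient boosted classifier over ℝ^m and let Φ be any predicate on the assignment variables (x, together with all decision-tree valuation variables, the regressor valuation variables out_1, …, out_c, and arg). Then the conjunction Γ(C) ∧ Φ is satisfiable if and only if the conjunction Γ^Φ(C) ∧ Φ is satisfiable. -/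
/-- Classifier encoding `Γ(C)` for a gradient boosted classifier `C = ⟨R_1, …, R_c⟩`,
where regressor `R_j` consists of the trees `T j i` for `i ∈ Fin (r j)`, at the assignment
`(x, wl, out_1, …, out_c, arg)`: for every `j`, the regressor encoding `Υ(R_j)` holds
(every tree encoding holds at `(x, wl j i)` and `out j = Σᵢ wl j i`), together with the
disjunction over `j` of the biconditional `arg = j ↔ out_j > out_k` for every `k ≠ j`. -/
def clsEnc {m c : ℕ} {r : Fin c → ℕ} (T : (j : Fin c) → Fin (r j) → DTree m)
    (x : Fin m → ℝ) (wl : (j : Fin c) → Fin (r j) → ℝ) (out : Fin c → ℝ)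
    (arg : Fin c) : Prop :=
  (∀ j : Fin c,
      (∀ i : Fin (r j), ∃ l : List Bool, (T j i).leafEnc l x (wl j i)) ∧
      out j = ∑ i : Fin (r j), wl j i) ∧
  (∃ j : Fin c, arg = j ↔ ∀ k : Fin c, k ≠ j → out j > out k)

/-- The conjunction of the leaf encoding `π(l)` of leaf `l` of tree `T j i` (at
`(x, wl j i)`) with `Φ` is satisfiable by some assignment. -/
def leafSat {m c : ℕ} {r : Fin c → ℕ} (T : (j : Fin c) → Fin (r j) → DTree m)
    (Φ : (Fin m → ℝ) → ((j : Fin c) → Fin (r j) → ℝ) → (Fin c → ℝ) → Fin c → Prop)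
    (j : Fin c) (i : Fin (r j)) (l : List Bool) : Prop :=
  ∃ (x : Fin m → ℝ) (wl : (j : Fin c) → Fin (r j) → ℝ) (out : Fin c → ℝ) (arg : Fin c),
    (T j i).leafEnc l x (wl j i) ∧ Φ x wl out arg

/-- The `Φ`-pruned classifier encoding `Γ^Φ(C)`: `Γ(C)` with every occurrence of a leaf
encoding `π(l)` replaced by the pruned version `π^Φ(l)`, which equals `π(l)` when
`π(l) ∧ Φ` is satisfiable and the constant `False` otherwise. -/
def prunedClsEnc {m c : ℕ} {r : Fin c → ℕ} (T : (j : Fin c) → Fin (r j) → DTree m)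
    (Φ : (Fin m → ℝ) → ((j : Fin c) → Fin (r j) → ℝ) → (Fin c → ℝ) → Fin c → Prop)
    (x : Fin m → ℝ) (wl : (j : Fin c) → Fin (r j) → ℝ) (out : Fin c → ℝ)
    (arg : Fin c) : Prop :=
  (∀ j : Fin c,
      (∀ i : Fin (r j), ∃ l : List Bool,
        leafSat T Φ j i l ∧ (T j i).leafEnc l x (wl j i)) ∧
      out j = ∑ i : Fin (r j), wl j i) ∧
  (∃ j : Fin c, arg = j ↔ ∀ k : Fin c, k ≠ j → out j > out k)

section Pruning

variable {m c : ℕ} {r : Fin c → ℕ} {T : (j : Fin c) → Fin (r j) → DTree m}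
  {Φ : (Fin m → ℝ) → ((j : Fin c) → Fin (r j) → ℝ) → (Fin c → ℝ) → Fin c → Prop}
  {x : Fin m → ℝ} {wl : (j : Fin c) → Fin (r j) → ℝ} {out : Fin c → ℝ} {arg : Fin c}

theorem leafSat_of_leafEnc {j : Fin c} {i : Fin (r j)} {l : List Bool}
    (hl : (T j i).leafEnc l x (wl j i)) (hΦ : Φ x wl out arg) : leafSat T Φ j i l :=
  ⟨x, wl, out, arg, hl, hΦ⟩

theorem clsEnc_of_prunedClsEnc (h : prunedClsEnc T Φ x wl out arg) : clsEnc T x wl out arg :=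
  ⟨fun j => ⟨fun i => ((h.1 j).1 i).imp fun _ hl => hl.2, (h.1 j).2⟩, h.2⟩

/-- Pruning only deletes leaves whose encoding is inconsistent with `Φ`; a model of `Φ`
witnesses the consistency of every leaf it activates. -/
theorem prunedClsEnc_of_clsEnc (h : clsEnc T x wl out arg) (hΦ : Φ x wl out arg) :
    prunedClsEnc T Φ x wl out arg :=
  ⟨fun j => ⟨fun i => ((h.1 j).1 i).imp fun _ hl => ⟨leafSat_of_leafEnc hl hΦ, hl⟩, (h.1 j).2⟩,
    h.2⟩

theorem clsEnc_and_iff_prunedClsEnc_and :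
    clsEnc T x wl out arg ∧ Φ x wl out arg ↔ prunedClsEnc T Φ x wl out arg ∧ Φ x wl out arg :=
  ⟨fun ⟨h, hΦ⟩ => ⟨prunedClsEnc_of_clsEnc h hΦ, hΦ⟩,
    fun ⟨h, hΦ⟩ => ⟨clsEnc_of_prunedClsEnc h, hΦ⟩⟩

end Pruning

/-- **Safe pruning for classifiers.** `Γ(C) ∧ Φ` is satisfiable if and only if
`Γ^Φ(C) ∧ Φ` is satisfiable. -/
theorem safe_pruning_classifier {m c : ℕ} {r : Fin c → ℕ}
    (T : (j : Fin c) → Fin (r j) → DTree m)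
    (Φ : (Fin m → ℝ) → ((j : Fin c) → Fin (r j) → ℝ) → (Fin c → ℝ) → Fin c → Prop) :
    (∃ (x : Fin m → ℝ) (wl : (j : Fin c) → Fin (r j) → ℝ) (out : Fin c → ℝ) (arg : Fin c),
        clsEnc T x wl out arg ∧ Φ x wl out arg) ↔
    (∃ (x : Fin m → ℝ) (wl : (j : Fin c) → Fin (r j) → ℝ) (out : Fin c → ℝ) (arg : Fin c),
        prunedClsEnc T Φ x wl out arg ∧ Φ x wl out arg) := by
  simp only [clsEnc_and_iff_prunedClsEnc_and]
end
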